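/- arXiv:2605.21961 — 8 statements merged into one kernel-verified Lean document; each statement's English description precedes it below -/
import Mathlib

section
/- Fix integers t ≥ 2, k ≥ 1 and q ≥ 1, and let H_{t,k,q} be the labelled multihypergraph on a vertex set V with |V| = t whose edge family consists of k + q copies of the full hyperedge V. Then H_{t,k,q} is k-weakly-partition-connected, its excess is ρ(H_{t,k,q}) = (k+q)(t−1) > k(t−1), and H_{t,k,q} has no k-distinguishable tree assignment. -/
open scoped Classical
noncomputable section

variable {W : Type*}

/-- `A` is the edge set of a tree with vertex set `e`: no loops, all endpoints in `e`,
acyclic, and any two vertices of `e` are connected. -/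
def IsTreeOn (e : Finset W) (A : Finset (Sym2 W)) : Prop :=
  (∀ s ∈ A, ¬ s.IsDiag) ∧
  (∀ s ∈ A, ∀ v ∈ s, v ∈ e) ∧
  (SimpleGraph.fromEdgeSet (A : Set (Sym2 W))).IsAcyclic ∧
  (∀ x ∈ e, ∀ y ∈ e, (SimpleGraph.fromEdgeSet (A : Set (Sym2 W))).Reachable x y)

/-- Number of blocks of the partition `P` that meet `e`. -/
def pblocks [DecidableEq W] {U : Finset W} (P : Finpartition U) (e : Finset W) : ℕ :=
  (P.parts.filter fun B => (B ∩ e).Nonempty).card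

/-- Number of edges in `A` whose two endpoints lie in distinct blocks of `P`. -/
def crossEdges [DecidableEq W] {U : Finset W} (P : Finpartition U) (A : Finset (Sym2 W)) : ℕ :=
  (A.filter fun s => ∀ B ∈ P.parts, ¬ (∀ v ∈ s, v ∈ B)).card

/-- `k`-weak partition connectivity of the multihypergraph with vertex set `U`
and hyperedge family `E`. -/
def WeaklyPC [DecidableEq W] {ι : Type*} [Fintype ι] (U : Finset W)
    (E : ι → Finset W) (k : ℕ) : Prop :=
  ∀ P : Finpartition U, k * (P.parts.card - 1) ≤ ∑ i, (pblocks P (E i) - 1)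

/-- The labelled edge set of the tree assignment `F`: each graph edge is tagged by
the hyperedge occurrence producing it. -/
def LEdges [DecidableEq W] {ι : Type*} [Fintype ι] [DecidableEq ι]
    (F : ι → Finset (Sym2 W)) : Finset (ι × Sym2 W) :=
  Finset.univ.biUnion fun i => (F i).image fun s => (i, s)

/-- An (ordered) `k`-tree decomposition of the labelled union of the tree assignment `F`:
each labelled edge gets a layer, and the labelled edges of each layer are (bijectively)
the edge set of a spanning tree of `U`. -/
structure KTreeDecomp [DecidableEq W] {ι : Type*} [Fintype ι] [DecidableEq ι]
    (U : Finset W) (F : ι → Finset (Sym2 W)) (k : ℕ) where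
  layer : ι × Sym2 W → Fin k
  tree : Fin k → Finset (Sym2 W)
  tree_isTree : ∀ j, IsTreeOn U (tree j)
  tree_eq : ∀ j, tree j = ((LEdges F).filter fun p => layer p = j).image Prod.snd
  layer_inj : ∀ p ∈ LEdges F, ∀ q ∈ LEdges F, layer p = layer q → p.2 = q.2 → p = q

/-- The signature of a `k`-tree decomposition: `sig D e = ∑ i, i • |E(T_i) ∩ E(F_e)|`. -/
def sig [DecidableEq W] {ι : Type*} [Fintype ι] [DecidableEq ι] {U : Finset W}
    {F : ι → Finset (Sym2 W)} {k : ℕ} (D : KTreeDecomp U F k) (i : ι) : ℕ :=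
  ∑ j : Fin k, j.1 * ((F i).filter fun s => D.layer (i, s) = j).card

/-- `H = (U, E)` has a `k`-distinguishable tree assignment. -/
def Distinguishable [DecidableEq W] {ι : Type*} [Fintype ι] [DecidableEq ι]
    (U : Finset W) (E : ι → Finset W) (k : ℕ) : Prop :=
  ∃ F : ι → Finset (Sym2 W), (∀ i, IsTreeOn (E i) (F i)) ∧
    ∃ D : KTreeDecomp U F k, ∀ D' : KTreeDecomp U F k,
      (∀ i, sig D' i = sig D i) → ∀ p ∈ LEdges F, D'.layer p = D.layer p

/-- The star on `e` centered at `c`. -/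
def starOn [DecidableEq W] (e : Finset W) (c : W) : Finset (Sym2 W) :=
  (e.erase c).image fun u => s(c, u)

/-!
The full hyperedge meets every block of a partition `𝒫`, so each copy contributes `|𝒫| - 1`
to the partition sum and `k ≤ k + q` copies give weak partition connectivity. On the other hand
every tree on the `t` vertices has `t - 1` edges, so any tree assignment yields `(k + q)(t - 1)`
labelled edges, while a `k`-tree decomposition has exactly `k(t - 1)`: no tree assignment admits
a `k`-tree decomposition at all.
-/

lemma card_add_one_of_isTreeOn_univ {V : Type*} [Fintype V] [Nonempty V] {A : Finset (Sym2 V)}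
    (h : IsTreeOn (Finset.univ : Finset V) A) : A.card + 1 = Fintype.card V := by
  obtain ⟨hdiag, -, hacyc, hreach⟩ := h
  have htree : (SimpleGraph.fromEdgeSet (A : Set (Sym2 V))).IsTree :=
    ⟨⟨fun x y => hreach x (Finset.mem_univ x) y (Finset.mem_univ y)⟩, hacyc⟩
  have hedges : (SimpleGraph.fromEdgeSet (A : Set (Sym2 V))).edgeFinset = A := by
    ext s
    simpa using fun hs => hdiag s hs
  simpa [hedges] using htree.card_edgeFinset

lemma card_lEdges {V ι : Type*} [Fintype ι] [DecidableEq V] [DecidableEq ι]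
    (F : ι → Finset (Sym2 V)) : (LEdges F).card = ∑ i, (F i).card := by
  rw [LEdges, Finset.card_biUnion]
  · exact Finset.sum_congr rfl fun i _ =>
      Finset.card_image_of_injective _ (Prod.mk_right_injective i)
  · intro i _ j _ hij
    simp only [Function.onFun, Finset.disjoint_left, Finset.mem_image]
    rintro _ ⟨s, -, rfl⟩ ⟨s', -, h⟩
    exact hij (congrArg Prod.fst h).symm

namespace KTreeDecomp

variable {V ι : Type*} [Fintype V] [DecidableEq V] [Nonempty V] [Fintype ι] [DecidableEq ι]
  {F : ι → Finset (Sym2 V)} {k : ℕ}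

lemma card_filter_layer_add_one (D : KTreeDecomp (Finset.univ : Finset V) F k) (j : Fin k) :
    ((LEdges F).filter fun p => D.layer p = j).card + 1 = Fintype.card V := by
  have hinj : Set.InjOn Prod.snd
      (((LEdges F).filter fun p => D.layer p = j) : Set (ι × Sym2 V)) := by
    intro p hp p' hp' h
    simp only [Finset.mem_coe, Finset.mem_filter] at hp hp'
    exact D.layer_inj p hp.1 p' hp'.1 (hp.2.trans hp'.2.symm) h
  rw [← Finset.card_image_of_injOn hinj, ← D.tree_eq j]
  exact card_add_one_of_isTreeOn_univ (D.tree_isTree j)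

lemma card_lEdges (D : KTreeDecomp (Finset.univ : Finset V) F k) :
    (LEdges F).card = k * (Fintype.card V - 1) := by
  have hlayer (j : Fin k) :
      ((LEdges F).filter fun p => D.layer p = j).card = Fintype.card V - 1 := by
    have := D.card_filter_layer_add_one j
    omega
  rw [Finset.card_eq_sum_card_fiberwise fun p _ => Finset.mem_univ (D.layer p),
    Finset.sum_congr rfl fun j _ => hlayer j]
  simp

end KTreeDecomp

lemma pblocks_self [DecidableEq W] {U : Finset W} (P : Finpartition U) :
    pblocks P U = P.parts.card := by
  rw [pblocks, Finset.filter_true_of_mem]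
  intro B hB
  rw [Finset.inter_eq_left.mpr (P.le hB)]
  exact P.nonempty_of_mem_parts hB

lemma weaklyPC_const_self [DecidableEq W] {ι : Type*} [Fintype ι] (U : Finset W) {k : ℕ}
    (hk : k ≤ Fintype.card ι) : WeaklyPC U (fun _ : ι => U) k := by
  intro P
  simp only [pblocks_self, Finset.sum_const, Finset.card_univ, smul_eq_mul]
  exact Nat.mul_le_mul_right _ hk

lemma not_distinguishable_const_univ {V ι : Type*} [Fintype V] [DecidableEq V] [Fintype ι]
    [DecidableEq ι] {k : ℕ} (hV : 2 ≤ Fintype.card V) (hk : k < Fintype.card ι) :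
    ¬ Distinguishable (Finset.univ : Finset V) (fun _ : ι => Finset.univ) k := by
  have : Nonempty V := Fintype.card_pos_iff.mp (by omega)
  rintro ⟨F, hF, D, -⟩
  have hcardF (i : ι) : (F i).card = Fintype.card V - 1 := by
    have := card_add_one_of_isTreeOn_univ (hF i)
    omega
  have hcount := D.card_lEdges
  rw [card_lEdges, Finset.sum_congr rfl fun i _ => hcardF i, Finset.sum_const,
    Finset.card_univ, smul_eq_mul] at hcount
  exact (Nat.mul_lt_mul_of_pos_right hk (by omega)).ne' hcount

theorem stmt3_general {V : Type*} [Fintype V] [DecidableEq V] (t k q : ℕ)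
    (hV : Fintype.card V = t) (ht : 2 ≤ t) (hq : 1 ≤ q) :
    WeaklyPC (Finset.univ : Finset V)
        (fun _ : Fin (k + q) => (Finset.univ : Finset V)) k ∧
    (∑ _i : Fin (k + q), ((Finset.univ : Finset V).card - 1) = (k + q) * (t - 1)) ∧
    k * (t - 1) < (k + q) * (t - 1) ∧
    ¬ Distinguishable (Finset.univ : Finset V)
        (fun _ : Fin (k + q) => (Finset.univ : Finset V)) k := by
  refine ⟨weaklyPC_const_self _ (by simp), by simp [hV],
    Nat.mul_lt_mul_of_pos_right (by omega) (by omega),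
    not_distinguishable_const_univ (by omega) (by rw [Fintype.card_fin]; omega)⟩

/-- For `t ≥ 2`, `k ≥ 1`, `q ≥ 1`, the multihypergraph `H_{t,k,q}` on a
`t`-element vertex set consisting of `k + q` copies of the full hyperedge `V` is
`k`-weakly-partition-connected, has excess `(k+q)(t-1) > k(t-1)`, and has no
`k`-distinguishable tree assignment. -/
theorem stmt3 {V : Type*} [Fintype V] [DecidableEq V] (t k q : ℕ)
    (hV : Fintype.card V = t) (ht : 2 ≤ t) (hk : 1 ≤ k) (hq : 1 ≤ q) :
    WeaklyPC (Finset.univ : Finset V)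
        (fun _ : Fin (k + q) => (Finset.univ : Finset V)) k ∧
    (∑ _i : Fin (k + q), ((Finset.univ : Finset V).card - 1) = (k + q) * (t - 1)) ∧
    k * (t - 1) < (k + q) * (t - 1) ∧
    ¬ Distinguishable (Finset.univ : Finset V)
        (fun _ : Fin (k + q) => (Finset.univ : Finset V)) k :=
  stmt3_general t k q hV ht hq

end
end

section
/- Let I_1, …, I_t be finsets of {1, …, n} with t ≥ 2, and suppose wt(I_J) ≤ k(|J| − 1) for every nonempty proper subset J of {1, …, t}, while wt(I_{{1,…,t}}) = k(t − 1). Let H be the labelled multihypergraph on {1, …, t} whose hyperedge occurrences are the supports e_s = {j : s ∈ I_j} for those s ∈ {1,…,n} with |e_s| ≥ 2. Then H is k-weakly-partition-connected and ρ(H) = k(t − 1). -/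
open scoped Classical
noncomputable section

variable {W : Type*}

/-- The support hyperedge `e_s = {j : s ∈ I_j}`. -/
def supportEdge {n t : ℕ} (I : Fin t → Finset (Fin n)) (s : Fin n) : Finset (Fin t) :=
  Finset.univ.filter fun j => s ∈ I j


section StmtSixAux
variable {n t : ℕ}

lemma supp_inter' (I : Fin t → Finset (Fin n)) (s : Fin n) (J : Finset (Fin t)) :
    supportEdge I s ∩ J = J.filter fun j => s ∈ I j := by
  ext j; simp [supportEdge, and_comm]

lemma sum_card_eq' (I : Fin t → Finset (Fin n)) (J : Finset (Fin t)) :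
    ∑ j ∈ J, (I j).card = ∑ s : Fin n, (supportEdge I s ∩ J).card := by
  have h1 : ∀ j, (I j).card = ∑ s : Fin n, if s ∈ I j then 1 else 0 := by
    intro j
    rw [Finset.sum_ite_mem, Finset.univ_inter, Finset.card_eq_sum_ones]
  calc ∑ j ∈ J, (I j).card = ∑ j ∈ J, ∑ s : Fin n, if s ∈ I j then 1 else 0 := by
        simp_rw [← h1]
    _ = ∑ s : Fin n, ∑ j ∈ J, if s ∈ I j then 1 else 0 := Finset.sum_comm
    _ = ∑ s : Fin n, (supportEdge I s ∩ J).card := by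
        refine Finset.sum_congr rfl fun s _ => ?_
        rw [supp_inter', Finset.card_filter]

lemma biUnion_card_eq' (I : Fin t → Finset (Fin n)) (J : Finset (Fin t)) :
    (J.biUnion I).card
      = ∑ s : Fin n, if (supportEdge I s ∩ J).Nonempty then 1 else 0 := by
  have : J.biUnion I = Finset.univ.filter fun s => (supportEdge I s ∩ J).Nonempty := by
    ext s
    simp [supp_inter', Finset.filter_nonempty_iff, Finset.mem_biUnion]
  rw [this, Finset.card_filter]

lemma wt_eq' (I : Fin t → Finset (Fin n)) (J : Finset (Fin t)) :
    (∑ j ∈ J, (I j).card) - (J.biUnion I).card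
      = ∑ s : Fin n, ((supportEdge I s ∩ J).card - 1) := by
  rw [sum_card_eq', biUnion_card_eq']
  have key : ∀ s : Fin n, (supportEdge I s ∩ J).card
      = ((supportEdge I s ∩ J).card - 1)
        + (if (supportEdge I s ∩ J).Nonempty then 1 else 0) := by
    intro s
    by_cases h : (supportEdge I s ∩ J).Nonempty
    · have : 1 ≤ (supportEdge I s ∩ J).card := Finset.card_pos.mpr h
      simp only [h, if_true]; omega
    · simp [h, Finset.not_nonempty_iff_eq_empty.mp h]
  calc (∑ s : Fin n, (supportEdge I s ∩ J).card)
        - ∑ s : Fin n, (if (supportEdge I s ∩ J).Nonempty then 1 else 0)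
      = ((∑ s : Fin n, ((supportEdge I s ∩ J).card - 1))
          + ∑ s : Fin n, (if (supportEdge I s ∩ J).Nonempty then 1 else 0))
        - ∑ s : Fin n, (if (supportEdge I s ∩ J).Nonempty then 1 else 0) := by
        rw [← Finset.sum_add_distrib]
        simp_rw [← key]
    _ = ∑ s : Fin n, ((supportEdge I s ∩ J).card - 1) := by omega

lemma part_card' (P : Finpartition (Finset.univ : Finset (Fin t))) (e : Finset (Fin t)) :
    ∑ B ∈ P.parts, (e ∩ B).card = e.card := by
  have hb : e = P.parts.biUnion fun B => e ∩ B := by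
    ext x
    simp only [Finset.mem_biUnion, Finset.mem_inter]
    constructor
    · intro hx
      have hx' : x ∈ P.parts.sup id := by rw [P.sup_parts]; exact Finset.mem_univ x
      rw [Finset.mem_sup] at hx'
      obtain ⟨B, hB, hxB⟩ := hx'
      exact ⟨B, hB, hx, hxB⟩
    · rintro ⟨B, _, hx, _⟩; exact hx
  rw [eq_comm]
  nth_rewrite 1 [hb]
  exact Finset.card_biUnion fun x hx y hy hne =>
    (P.disjoint hx hy hne).mono Finset.inter_subset_right Finset.inter_subset_right

lemma part_decomp' (P : Finpartition (Finset.univ : Finset (Fin t))) (e : Finset (Fin t)) :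
    e.card - 1 = (∑ B ∈ P.parts, ((e ∩ B).card - 1)) + (pblocks P e - 1) ∧
    pblocks P e ≤ e.card := by
  classical
  set Q := P.parts.filter fun B => (B ∩ e).Nonempty with hQ
  have hQsub : Q ⊆ P.parts := Finset.filter_subset _ _
  have hzero' : ∀ B ∈ P.parts, B ∉ Q → (e ∩ B).card = 0 := by
    intro B hB hBQ
    rcases Nat.eq_zero_or_pos (e ∩ B).card with h | h
    · exact h
    · exfalso
      have : (B ∩ e).Nonempty := by
        rw [Finset.inter_comm]; exact Finset.card_pos.mp h
      exact hBQ (Finset.mem_filter.mpr ⟨hB, this⟩)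
  have hzero : ∀ B ∈ P.parts, B ∉ Q → (e ∩ B).card - 1 = 0 := by
    intro B hB hBQ; rw [hzero' B hB hBQ]
  have hone : ∀ B ∈ Q, 1 ≤ (e ∩ B).card := by
    intro B hB
    rw [Finset.inter_comm]
    exact Finset.card_pos.mpr (Finset.mem_filter.mp hB).2
  have hsum1 : ∑ B ∈ P.parts, ((e ∩ B).card - 1) = ∑ B ∈ Q, ((e ∩ B).card - 1) :=
    (Finset.sum_subset hQsub fun B hB hBQ => hzero B hB hBQ).symm
  have hsum2 : ∑ B ∈ P.parts, (e ∩ B).card = ∑ B ∈ Q, (e ∩ B).card :=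
    (Finset.sum_subset hQsub fun B hB hBQ => hzero' B hB hBQ).symm
  have hM : ∑ B ∈ Q, (e ∩ B).card = e.card := by rw [← hsum2, part_card']
  have hsplit : ∑ B ∈ Q, (e ∩ B).card
      = (∑ B ∈ Q, ((e ∩ B).card - 1)) + Q.card := by
    rw [Finset.card_eq_sum_ones Q, ← Finset.sum_add_distrib]
    exact Finset.sum_congr rfl fun B hB => by have := hone B hB; omega
  have hple : Q.card ≤ e.card := by
    rw [← hM, Finset.card_eq_sum_ones Q]
    exact Finset.sum_le_sum hone
  have hp0 : Q.card = 0 → e.card = 0 := by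
    intro h
    rw [Finset.card_eq_zero] at h
    rw [← hM, h, Finset.sum_empty]
  have hpb : pblocks P e = Q.card := rfl
  refine ⟨?_, by rw [hpb]; exact hple⟩
  rw [hsum1, hpb]
  omega

lemma subtype_sum' (I : Fin t → Finset (Fin n))
    [Fintype {s : Fin n // 2 ≤ (supportEdge I s).card}] (f : Fin n → ℕ)
    (h0 : ∀ s, ¬ 2 ≤ (supportEdge I s).card → f s = 0) :
    ∑ i : {s : Fin n // 2 ≤ (supportEdge I s).card}, f i.1 = ∑ s : Fin n, f s := by
  classical
  rw [← Finset.sum_subtype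
      (Finset.univ.filter fun s => 2 ≤ (supportEdge I s).card) (by simp) f]
  exact Finset.sum_subset (Finset.filter_subset _ _)
    (fun x _ hx => h0 x (by simpa using hx))

end StmtSixAux

/-- If `wt(I_J) ≤ k(|J| - 1)` for every nonempty proper `J ⊆ [t]` and
`wt(I_{[t]}) = k(t - 1)`, then the support hypergraph `H(I₁, …, I_t)` (whose hyperedge
occurrences are the supports `e_s` of size at least 2) is `k`-weakly-partition-connected
with `ρ(H) = k(t - 1)`. -/
theorem stmt6 (n t k : ℕ) (ht : 2 ≤ t) (I : Fin t → Finset (Fin n))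
    (hwt : ∀ J : Finset (Fin t), J.Nonempty → J ≠ Finset.univ →
      (∑ j ∈ J, (I j).card) - (J.biUnion I).card ≤ k * (J.card - 1))
    (hfull : (∑ j : Fin t, (I j).card)
        - ((Finset.univ : Finset (Fin t)).biUnion I).card = k * (t - 1)) :
    WeaklyPC (Finset.univ : Finset (Fin t))
        (fun s : {s : Fin n // 2 ≤ (supportEdge I s).card} => supportEdge I s.1) k ∧
    (∑ s : {s : Fin n // 2 ≤ (supportEdge I s).card}, ((supportEdge I s.1).card - 1))
      = k * (t - 1) := by
  classical
  have hfull' : ∑ s : Fin n, ((supportEdge I s).card - 1) = k * (t - 1) := by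
    have h := wt_eq' I Finset.univ
    simp only [Finset.inter_univ] at h
    rw [← h]; exact hfull
  constructor
  · intro P
    by_cases hm : P.parts.card ≤ 1
    · have h1 : P.parts.card - 1 = 0 := by omega
      simp [h1]
    push_neg at hm
    have hprop : ∀ B ∈ P.parts, B.Nonempty ∧ B ≠ Finset.univ := by
      intro B hB
      refine ⟨P.nonempty_of_mem_parts hB, ?_⟩
      obtain ⟨B', hB', hne⟩ := Finset.exists_mem_ne hm B
      obtain ⟨x, hx⟩ := P.nonempty_of_mem_parts hB'
      have hdisj : Disjoint B' B := P.disjoint hB' hB hne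
      intro hBu
      exact (Finset.disjoint_left.mp hdisj hx) (hBu ▸ Finset.mem_univ x)
    have hdec : ∀ s : Fin n, ((supportEdge I s).card - 1)
        = (∑ B ∈ P.parts, ((supportEdge I s ∩ B).card - 1))
          + (pblocks P (supportEdge I s) - 1) := fun s => (part_decomp' P _).1
    have hswap : k * (t - 1)
        = (∑ B ∈ P.parts, ∑ s : Fin n, ((supportEdge I s ∩ B).card - 1))
          + ∑ s : Fin n, (pblocks P (supportEdge I s) - 1) := by
      rw [← hfull']
      calc ∑ s : Fin n, ((supportEdge I s).card - 1)
          = ∑ s : Fin n, ((∑ B ∈ P.parts, ((supportEdge I s ∩ B).card - 1))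
              + (pblocks P (supportEdge I s) - 1)) :=
            Finset.sum_congr rfl fun s _ => hdec s
        _ = (∑ s : Fin n, ∑ B ∈ P.parts, ((supportEdge I s ∩ B).card - 1))
              + ∑ s : Fin n, (pblocks P (supportEdge I s) - 1) :=
            Finset.sum_add_distrib
        _ = _ := by rw [Finset.sum_comm]
    have hA : ∀ B ∈ P.parts,
        ∑ s : Fin n, ((supportEdge I s ∩ B).card - 1) ≤ k * (B.card - 1) := by
      intro B hB
      rw [← wt_eq']
      exact hwt B (hprop B hB).1 (hprop B hB).2
    have hAB : ∑ B ∈ P.parts, (∑ s : Fin n, ((supportEdge I s ∩ B).card - 1))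
        ≤ k * (t - P.parts.card) := by
      have h1 : ∑ B ∈ P.parts, B.card = t := by
        rw [P.sum_card_parts]; simp
      have hone : ∀ B ∈ P.parts, 1 ≤ B.card :=
        fun B hB => Finset.card_pos.mpr (hprop B hB).1
      have hmt : P.parts.card ≤ t := by
        calc P.parts.card = ∑ _B ∈ P.parts, 1 := (Finset.card_eq_sum_ones _)
          _ ≤ ∑ B ∈ P.parts, B.card := Finset.sum_le_sum hone
          _ = t := h1
      have hsplit : ∑ B ∈ P.parts, B.card
          = (∑ B ∈ P.parts, (B.card - 1)) + P.parts.card := by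
        rw [Finset.card_eq_sum_ones P.parts, ← Finset.sum_add_distrib]
        exact Finset.sum_congr rfl fun B hB => by have := hone B hB; omega
      have h2 : ∑ B ∈ P.parts, (B.card - 1) = t - P.parts.card := by omega
      calc ∑ B ∈ P.parts, (∑ s : Fin n, ((supportEdge I s ∩ B).card - 1))
          ≤ ∑ B ∈ P.parts, k * (B.card - 1) := Finset.sum_le_sum hA
        _ = k * ∑ B ∈ P.parts, (B.card - 1) := by rw [Finset.mul_sum]
        _ = k * (t - P.parts.card) := by rw [h2]
    have hmt : P.parts.card ≤ t := by
      have h1 : ∑ B ∈ P.parts, B.card = t := by rw [P.sum_card_parts]; simp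
      calc P.parts.card = ∑ _B ∈ P.parts, 1 := (Finset.card_eq_sum_ones _)
        _ ≤ ∑ B ∈ P.parts, B.card :=
            Finset.sum_le_sum fun B hB => Finset.card_pos.mpr (hprop B hB).1
        _ = t := h1
    have hfin : k * (P.parts.card - 1) + k * (t - P.parts.card) = k * (t - 1) := by
      rw [← Nat.mul_add]
      congr 1
      omega
    have hS : k * (P.parts.card - 1)
        ≤ ∑ s : Fin n, (pblocks P (supportEdge I s) - 1) := by
      have h3 : k * (P.parts.card - 1)
            + ∑ B ∈ P.parts, (∑ s : Fin n, ((supportEdge I s ∩ B).card - 1))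
          ≤ (∑ B ∈ P.parts, (∑ s : Fin n, ((supportEdge I s ∩ B).card - 1)))
            + ∑ s : Fin n, (pblocks P (supportEdge I s) - 1) := by
        calc k * (P.parts.card - 1)
              + ∑ B ∈ P.parts, (∑ s : Fin n, ((supportEdge I s ∩ B).card - 1))
            ≤ k * (P.parts.card - 1) + k * (t - P.parts.card) :=
              Nat.add_le_add_left hAB _
          _ = k * (t - 1) := hfin
          _ = _ := hswap
      omega
    have hconv : ∑ i : {s : Fin n // 2 ≤ (supportEdge I s).card},
        (pblocks P (supportEdge I i.1) - 1)
        = ∑ s : Fin n, (pblocks P (supportEdge I s) - 1) := by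
      refine subtype_sum' I (fun s => pblocks P (supportEdge I s) - 1) fun s hs => ?_
      show pblocks P (supportEdge I s) - 1 = 0
      have := (part_decomp' P (supportEdge I s)).2
      omega
    rw [hconv]
    exact hS
  · rw [← hfull']
    refine subtype_sum' I (fun s => (supportEdge I s).card - 1) fun s hs => ?_
    show (supportEdge I s).card - 1 = 0
    omega

end
end

section
/- Let V be a finite set, e ⊆ V a finset with at least 2 elements, c ∈ e, and 𝒫 a partition of V with P_c the block containing c. Let S_e(c) be the star on e centered at c, i.e. the graph with edges {c,u} for u ∈ e \ {c}. Then the number of edges of S_e(c) whose endpoints lie in distinct blocks of 𝒫 equals Σ_{P∈𝒫, P≠P_c} |P ∩ e|, which equals (p_𝒫(e) − 1) + Σ_{P∈𝒫, P≠P_c} max(0, |P ∩ e| − 1). In particular it equals p_𝒫(e) − 1 whenever every block other than P_c meets e in at most one vertex, and always when |e| = 2. -/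
open scoped Classical
noncomputable section

variable {W : Type*}

theorem stmt7_aux {V : Type*} [Fintype V] [DecidableEq V] (P : Finpartition (Finset.univ : Finset V)) (X : Finset V) :
    ∑ B ∈ P.parts, (B ∩ X).card = X.card := by
  rw [← Finset.card_biUnion]
  · congr 1; ext x
    simp only [Finset.mem_biUnion, Finset.mem_inter]
    constructor
    · rintro ⟨B, _, _, hx⟩; exact hx
    · intro hx
      obtain ⟨B, hB, hxB⟩ := P.exists_mem (Finset.mem_univ x)
      exact ⟨B, hB, hxB, hx⟩
  · intro B hB C hC hne
    exact ((P.disjoint hB hC hne).mono Finset.inter_subset_left Finset.inter_subset_left)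

/-- star crossing formula.  For the star `S_e(c)` and `P_c` the block
of `𝒫` containing `c`, the number of crossing edges of `S_e(c)` equals
`∑_{P ≠ P_c} |P ∩ e| = (p_𝒫(e) - 1) + ∑_{P ≠ P_c} max (0, |P ∩ e| - 1)`; in particular
it equals `p_𝒫(e) - 1` when every noncenter block meets `e` in at most one vertex,
and always when `|e| = 2`. -/
theorem stmt7 {V : Type*} [Fintype V] [DecidableEq V]
    (P : Finpartition (Finset.univ : Finset V)) (e : Finset V) (he : 2 ≤ e.card)
    (c : V) (hc : c ∈ e) (Pc : Finset V) (hPc : Pc ∈ P.parts) (hcPc : c ∈ Pc) :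
    crossEdges P (starOn e c) = ∑ B ∈ P.parts.erase Pc, (B ∩ e).card ∧
    crossEdges P (starOn e c)
      = (pblocks P e - 1) + ∑ B ∈ P.parts.erase Pc, ((B ∩ e).card - 1) ∧
    ((∀ B ∈ P.parts.erase Pc, (B ∩ e).card ≤ 1) →
      crossEdges P (starOn e c) = pblocks P e - 1) ∧
    (e.card = 2 → crossEdges P (starOn e c) = pblocks P e - 1) := by
  classical
  have hdisj : ∀ B ∈ P.parts.erase Pc, Disjoint B Pc := by
    intro B hB
    obtain ⟨hne, hBp⟩ := Finset.mem_erase.mp hB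
    exact P.disjoint hBp hPc hne
  -- crossEdges = (e \ Pc).card
  have hcross : crossEdges P (starOn e c) = (e \ Pc).card := by
    have hset : (starOn e c).filter (fun s => ∀ B ∈ P.parts, ¬ (∀ v ∈ s, v ∈ B))
        = (e \ Pc).image fun u => s(c, u) := by
      ext t
      simp only [starOn, Finset.mem_filter, Finset.mem_image, Finset.mem_erase,
        Finset.mem_sdiff]
      constructor
      · rintro ⟨⟨u, ⟨huc, hue⟩, rfl⟩, hpred⟩
        refine ⟨u, ⟨hue, fun huPc => hpred Pc hPc ?_⟩, rfl⟩
        intro v hv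
        rw [Sym2.mem_iff] at hv
        rcases hv with rfl | rfl
        · exact hcPc
        · exact huPc
      · rintro ⟨u, ⟨hue, huPc⟩, rfl⟩
        have huc : u ≠ c := fun h => huPc (h ▸ hcPc)
        refine ⟨⟨u, ⟨huc, hue⟩, rfl⟩, fun B hB hall => ?_⟩
        have hcB : c ∈ B := hall c (Sym2.mem_mk_left c u)
        have huB : u ∈ B := hall u (Sym2.mem_mk_right c u)
        exact huPc (P.eq_of_mem_parts hB hPc hcB hcPc ▸ huB)
    rw [crossEdges, Finset.filter_congr_decidable, hset, Finset.card_image_of_injOn]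
    intro u hu v hv h
    simp only [Finset.coe_sdiff, Set.mem_diff, Finset.mem_coe] at hu hv
    rw [Sym2.eq_iff] at h
    rcases h with ⟨_, h⟩ | ⟨h1, h2⟩
    · exact h
    · exact absurd (h2 ▸ hcPc) hu.2
  have hsum : ∑ B ∈ P.parts.erase Pc, (B ∩ e).card = (e \ Pc).card := by
    have h1 : ∀ B ∈ P.parts.erase Pc, (B ∩ e).card = (B ∩ (e \ Pc)).card := by
      intro B hB
      congr 1
      ext x
      simp only [Finset.mem_inter, Finset.mem_sdiff]
      exact ⟨fun ⟨hxB, hxe⟩ => ⟨hxB, hxe, fun hxPc =>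
        Finset.disjoint_left.mp (hdisj B hB) hxB hxPc⟩,
        fun ⟨hxB, hxe, _⟩ => ⟨hxB, hxe⟩⟩
    rw [Finset.sum_congr rfl h1]
    have h2 : (Pc ∩ (e \ Pc)).card = 0 := by
      rw [Finset.card_eq_zero, Finset.eq_empty_iff_forall_notMem]
      intro x hx
      simp only [Finset.mem_inter, Finset.mem_sdiff] at hx
      exact hx.2.2 hx.1
    have := stmt7_aux P (e \ Pc)
    rw [← Finset.sum_erase_add _ _ hPc, h2, add_zero] at this
    exact this
  have first : crossEdges P (starOn e c) = ∑ B ∈ P.parts.erase Pc, (B ∩ e).card := by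
    rw [hcross, hsum]
  -- second
  have hPcmem : Pc ∈ P.parts.filter fun B => (B ∩ e).Nonempty :=
    Finset.mem_filter.mpr ⟨hPc, ⟨c, Finset.mem_inter.mpr ⟨hcPc, hc⟩⟩⟩
  have hp1 : pblocks P e - 1 =
      ((P.parts.erase Pc).filter fun B => (B ∩ e).Nonempty).card := by
    rw [pblocks, Finset.filter_erase, Finset.card_erase_of_mem hPcmem]
  have second : ∑ B ∈ P.parts.erase Pc, (B ∩ e).card
      = (pblocks P e - 1) + ∑ B ∈ P.parts.erase Pc, ((B ∩ e).card - 1) := by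
    have e1 : ∑ B ∈ P.parts.erase Pc, (B ∩ e).card
        = ∑ B ∈ (P.parts.erase Pc).filter (fun B => (B ∩ e).Nonempty), (B ∩ e).card := by
      rw [Finset.sum_filter_of_ne]
      intro B _ h
      exact Finset.card_ne_zero.mp h
    have e2 : ∑ B ∈ P.parts.erase Pc, ((B ∩ e).card - 1)
        = ∑ B ∈ (P.parts.erase Pc).filter (fun B => (B ∩ e).Nonempty), ((B ∩ e).card - 1) := by
      rw [Finset.sum_filter_of_ne]
      intro B _ h
      exact Finset.card_ne_zero.mp (fun h0 => h (by rw [h0]; rfl))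
    rw [e1, e2, hp1, Finset.card_eq_sum_ones, ← Finset.sum_add_distrib]
    refine Finset.sum_congr rfl fun B hB => ?_
    have hne : (B ∩ e).Nonempty := (Finset.mem_filter.mp hB).2
    have h1 : 1 ≤ (B ∩ e).card := Finset.card_pos.mpr hne
    omega
  have third : (∀ B ∈ P.parts.erase Pc, (B ∩ e).card ≤ 1) →
      crossEdges P (starOn e c) = pblocks P e - 1 := by
    intro h
    rw [first, second]
    have : ∑ B ∈ P.parts.erase Pc, ((B ∩ e).card - 1) = 0 := by
      refine Finset.sum_eq_zero fun B hB => ?_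
      have := h B hB; omega
    rw [this, add_zero]
  refine ⟨first, first.trans second, third, fun h2 => third fun B hB => ?_⟩
  have hsub : B ∩ e ⊆ e.erase c := by
    intro x hx
    obtain ⟨hxB, hxe⟩ := Finset.mem_inter.mp hx
    refine Finset.mem_erase.mpr ⟨fun h => ?_, hxe⟩
    exact Finset.disjoint_left.mp (hdisj B hB) hxB (h ▸ hcPc)
  calc (B ∩ e).card ≤ (e.erase c).card := Finset.card_le_card hsub
    _ = 1 := by rw [Finset.card_erase_of_mem hc, h2]

end
end

section
/- Let V be a finite set, let 𝒫 be a partition of V, let e ⊆ V be a nonempty finset, and let F be a tree with vertex set e (a connected acyclic graph on e). Then the number of edges of F whose two endpoints lie in distinct blocks of 𝒫 is at least p_𝒫(e) − 1, where p_𝒫(e) is the number of blocks of 𝒫 meeting e. -/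
open scoped Classical
noncomputable section

variable {W : Type*}

/-! The blocks met by a connected edge set `A` on `e` form a connected quotient graph whose edges
are the crossing edges of `A`, so there are at least `p_𝒫(e) - 1` of them. Instead of quotienting,
we argue by induction on the number of labels: a crossing edge `s(a, b)` exists by connectivity,
and relabelling the block of `a` as the block of `b` removes one label and at least that edge. -/

section Crossing

variable {V β : Type*} [DecidableEq β]

def crossingBy (f : V → β) (A : Finset (Sym2 V)) : Finset (Sym2 V) :=
  A.filter fun s => ¬ (s.map f).IsDiag

@[simp]
lemma mk_mem_crossingBy {f : V → β} {A : Finset (Sym2 V)} {a b : V} :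
    s(a, b) ∈ crossingBy f A ↔ s(a, b) ∈ A ∧ f a ≠ f b := by
  simp [crossingBy]

lemma crossingBy_comp_subset_erase {γ : Type*} [DecidableEq γ] {f : V → β}
    {A : Finset (Sym2 V)} (φ : β → γ) {a b : V} (hab : φ (f a) = φ (f b)) :
    crossingBy (φ ∘ f) A ⊆ (crossingBy f A).erase s(a, b) := by
  intro s hs
  induction s using Sym2.inductionOn with
  | hf u v =>
    rw [mk_mem_crossingBy] at hs
    refine Finset.mem_erase.2 ⟨?_, mk_mem_crossingBy.2 ⟨hs.1, fun huv => hs.2 ?_⟩⟩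
    · rw [Ne, Sym2.eq_iff]
      rintro (⟨rfl, rfl⟩ | ⟨rfl, rfl⟩) <;> simp_all
    · simp [huv]

lemma exists_mk_mem_crossingBy_of_reachable {f : V → β} {A : Finset (Sym2 V)} {x y : V}
    (hxy : (SimpleGraph.fromEdgeSet (A : Set (Sym2 V))).Reachable x y) (hf : f x ≠ f y) :
    ∃ a b, s(a, b) ∈ crossingBy f A := by
  obtain ⟨w⟩ := hxy
  obtain ⟨d, hd, hfst, hsnd⟩ := w.exists_boundary_dart {v | f v = f x} rfl (Ne.symm hf)
  have hdA : s(d.fst, d.snd) ∈ A := (SimpleGraph.fromEdgeSet_adj _).1 d.adj |>.1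
  exact ⟨d.fst, d.snd, mk_mem_crossingBy.2 ⟨hdA, fun h => hsnd (h.symm.trans hfst)⟩⟩

lemma Finset.image_ite_eq_erase {s : Finset β} {x y : β} (hy : y ∈ s) (hxy : x ≠ y) :
    s.image (fun c => if c = x then y else c) = s.erase x := by
  ext c
  simp only [Finset.mem_image, Finset.mem_erase]
  constructor
  · rintro ⟨c, hc, rfl⟩
    split_ifs with h
    · exact ⟨hxy.symm, hy⟩
    · exact ⟨h, hc⟩
  · rintro ⟨hcx, hc⟩
    exact ⟨c, hc, if_neg hcx⟩

theorem card_image_le_card_crossingBy_add_one {A : Finset (Sym2 V)} {e : Finset V}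
    (hA : ∀ s ∈ A, ∀ v ∈ s, v ∈ e)
    (hconn : ∀ x ∈ e, ∀ y ∈ e, (SimpleGraph.fromEdgeSet (A : Set (Sym2 V))).Reachable x y)
    (f : V → β) :
    (e.image f).card ≤ (crossingBy f A).card + 1 := by
  induction hn : (e.image f).card generalizing f with
  | zero => omega
  | succ n ih =>
    obtain hle | hlt := le_or_gt (n + 1) 1
    · omega
    obtain ⟨_, hx, _, hy, hxy⟩ := Finset.one_lt_card.1 (hn ▸ hlt)
    obtain ⟨x, hxe, rfl⟩ := Finset.mem_image.1 hx
    obtain ⟨y, hye, rfl⟩ := Finset.mem_image.1 hy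
    obtain ⟨a, b, hab⟩ := exists_mk_mem_crossingBy_of_reachable (hconn x hxe y hye) hxy
    obtain ⟨habA, hfab⟩ := mk_mem_crossingBy.1 hab
    have hae : a ∈ e := hA _ habA a (Sym2.mem_mk_left a b)
    have hbe : b ∈ e := hA _ habA b (Sym2.mem_mk_right a b)
    set φ : β → β := fun c => if c = f a then f b else c
    have hcard : (e.image (φ ∘ f)).card = n := by
      rw [← Finset.image_image, Finset.image_ite_eq_erase
        (Finset.mem_image_of_mem f hbe) hfab, Finset.card_erase_of_mem
        (Finset.mem_image_of_mem f hae), hn, Nat.add_sub_cancel]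
    have hsub := Finset.card_le_card
      (crossingBy_comp_subset_erase (f := f) (A := A) φ (a := a) (b := b) (by simp [φ]))
    rw [Finset.card_erase_of_mem hab] at hsub
    have hpos := Finset.card_pos.2 ⟨_, hab⟩
    have := ih (φ ∘ f) hcard
    omega

end Crossing

section Partition

variable {W : Type*} [DecidableEq W] {U : Finset W} (P : Finpartition U)

lemma pblocks_eq_card_image_part {e : Finset W} (he : e ⊆ U) :
    pblocks P e = (e.image P.part).card := by
  rw [pblocks]
  congr 1
  ext B
  simp only [Finset.mem_filter, Finset.mem_image, Finset.Nonempty, Finset.mem_inter]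
  constructor
  · rintro ⟨hB, x, hxB, hxe⟩
    exact ⟨x, hxe, P.part_eq_of_mem hB hxB⟩
  · rintro ⟨x, hxe, rfl⟩
    exact ⟨P.part_mem.2 (he hxe), x, P.mem_part (he hxe), hxe⟩

lemma crossEdges_eq_card_crossingBy_part {A : Finset (Sym2 W)}
    (hA : ∀ s ∈ A, ∀ v ∈ s, v ∈ U) :
    crossEdges P A = (crossingBy P.part A).card := by
  rw [crossEdges]
  congr 1
  refine Finset.filter_congr fun s hs => ?_
  induction s using Sym2.inductionOn with
  | hf a b =>
    have ha := hA _ hs a (Sym2.mem_mk_left a b)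
    have hb := hA _ hs b (Sym2.mem_mk_right a b)
    simp only [Sym2.map_mk, Sym2.mk_isDiag_iff, Sym2.mem_iff, forall_eq_or_imp, forall_eq]
    constructor
    · intro h hab
      exact h _ (P.part_mem.2 ha) ⟨P.mem_part ha, hab ▸ P.mem_part hb⟩
    · rintro h B hB ⟨haB, hbB⟩
      exact h ((P.part_eq_of_mem hB haB).trans (P.part_eq_of_mem hB hbB).symm)

end Partition

theorem stmt8_general {V : Type*} [Fintype V] [DecidableEq V]
    (P : Finpartition (Finset.univ : Finset V)) (e : Finset V)
    (A : Finset (Sym2 V)) (hA : IsTreeOn e A) :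
    pblocks P e - 1 ≤ crossEdges P A := by
  obtain ⟨-, hAe, -, hconn⟩ := hA
  rw [pblocks_eq_card_image_part P (Finset.subset_univ e),
    crossEdges_eq_card_crossingBy_part P fun _ _ _ _ => Finset.mem_univ _]
  have := card_image_le_card_crossingBy_add_one hAe hconn P.part
  omega

/-- For any tree `F` with vertex set a nonempty finset `e ⊆ V` and any
partition `𝒫` of `V`, the number of edges of `F` crossing `𝒫` is at least `p_𝒫(e) - 1`. -/
theorem stmt8 {V : Type*} [Fintype V] [DecidableEq V]
    (P : Finpartition (Finset.univ : Finset V)) (e : Finset V) (he : e.Nonempty)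
    (A : Finset (Sym2 V)) (hA : IsTreeOn e A) :
    pblocks P e - 1 ≤ crossEdges P A :=
  stmt8_general P e A hA

end
end

section
/- Let T be a spanning tree of a finite vertex set V, let 𝒫 be a partition of V with s blocks, and suppose the edge set of T is partitioned into classes A_1, …, A_m, where for each j there is a finset e_j ⊆ V with |e_j| ≥ 2 such that every edge in A_j has both endpoints in e_j. Then s − 1 ≤ Σ_{j=1}^{m} (p_𝒫(e_j) − 1), where p_𝒫(e_j) is the number of blocks of 𝒫 meeting e_j. -/
/-!
Form the bipartite incidence graph `H` between the blocks of `𝒫` and the indices `j`, joining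
`B` to `j` when `B` meets `e_j`; it has `∑ j, p_𝒫(e_j)` edges. Consecutive vertices of a path
in `T` lie in a common `e_j`, so their blocks are joined in `H` through `j`; since `T` is
spanning and every `e_j` is nonempty, `H` is connected. A connected graph on `s + m` vertices
has at least `s + m - 1` edges, which is the claim.
-/

open scoped Classical
noncomputable section

variable {W : Type*}

open Finset

namespace SimpleGraph

variable {α β : Type*}

theorem Reachable.lift {G : SimpleGraph α} {H : SimpleGraph β} (f : α → β)
    (hf : ∀ x y, G.Adj x y → H.Reachable (f x) (f y)) {x y : α} (h : G.Reachable x y) :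
    H.Reachable (f x) (f y) := by
  rw [reachable_iff_reflTransGen] at h ⊢
  exact Relation.ReflTransGen.lift' f
    (fun a b hab => (reachable_iff_reflTransGen _ _).1 (hf a b hab)) _ _ h

def incidenceGraph (r : α → β → Prop) : SimpleGraph (α ⊕ β) where
  Adj
    | .inl a, .inr b | .inr b, .inl a => r a b
    | _, _ => False
  symm := ⟨by rintro (a | b) (a' | b') h <;> exact h⟩
  loopless := ⟨by rintro (a | b) h <;> exact h⟩

theorem edgeSet_incidenceGraph (r : α → β → Prop) :
    (incidenceGraph r).edgeSet = Set.range fun p : {p : α × β // r p.1 p.2} =>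
      s(.inl p.1.1, .inr p.1.2) := by
  ext f
  induction f using Sym2.ind with
  | _ u v =>
    rcases u with a | b <;> rcases v with a' | b' <;>
      simp [incidenceGraph]

theorem card_edgeSet_incidenceGraph (r : α → β → Prop) :
    Nat.card (incidenceGraph r).edgeSet = Nat.card {p : α × β // r p.1 p.2} := by
  rw [edgeSet_incidenceGraph]
  refine Nat.card_range_of_injective fun p q h => ?_
  simpa [Sym2.eq_iff, Subtype.ext_iff, Prod.ext_iff] using h

end SimpleGraph

namespace Finpartition

open SimpleGraph

variable {V ι : Type*} [Fintype V] [DecidableEq V] (P : Finpartition (univ : Finset V))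
  (e : ι → Finset V)

def blockOf (x : V) : P.parts := ⟨P.part x, P.part_mem.2 (mem_univ x)⟩

theorem mem_blockOf (x : V) : x ∈ (P.blockOf x : Finset V) := P.mem_part (mem_univ x)

theorem blockOf_eq {B : P.parts} {x : V} (hx : x ∈ (B : Finset V)) : P.blockOf x = B :=
  Subtype.ext (P.part_eq_of_mem B.2 hx)

def blockIncidenceGraph : SimpleGraph (P.parts ⊕ ι) :=
  incidenceGraph fun B j => ((B : Finset V) ∩ e j).Nonempty

variable {P e}

theorem blockIncidenceGraph_adj_blockOf {x : V} {j : ι} (hx : x ∈ e j) :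
    (P.blockIncidenceGraph e).Adj (.inl (P.blockOf x)) (.inr j) :=
  ⟨x, mem_inter.2 ⟨P.mem_blockOf x, hx⟩⟩

theorem preconnected_blockIncidenceGraph {G : SimpleGraph V} (hG : G.Preconnected)
    (hGe : ∀ x y, G.Adj x y → ∃ j, x ∈ e j ∧ y ∈ e j) (he : ∀ j, (e j).Nonempty) :
    (P.blockIncidenceGraph e).Preconnected := by
  have hblocks :
      ∀ x y, (P.blockIncidenceGraph e).Reachable (.inl (P.blockOf x)) (.inl (P.blockOf y)) :=
    fun x y => (hG x y).lift (Sum.inl ∘ P.blockOf) fun x y hxy => by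
      obtain ⟨j, hx, hy⟩ := hGe x y hxy
      exact (blockIncidenceGraph_adj_blockOf hx).reachable.trans
        (blockIncidenceGraph_adj_blockOf hy).symm.reachable
  have hreach : ∀ v, ∃ x, (P.blockIncidenceGraph e).Reachable v (.inl (P.blockOf x)) := by
    rintro (B | j)
    · obtain ⟨x, hx⟩ := P.nonempty_of_mem_parts B.2
      exact ⟨x, by rw [P.blockOf_eq hx]⟩
    · obtain ⟨x, hx⟩ := he j
      exact ⟨x, (blockIncidenceGraph_adj_blockOf hx).symm.reachable⟩
  intro v w
  obtain ⟨x, hx⟩ := hreach v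
  obtain ⟨y, hy⟩ := hreach w
  exact hx.trans ((hblocks x y).trans hy.symm)

theorem card_edgeSet_blockIncidenceGraph [Fintype ι] :
    Nat.card (P.blockIncidenceGraph e).edgeSet = ∑ j, pblocks P (e j) := by
  rw [blockIncidenceGraph, card_edgeSet_incidenceGraph, Nat.card_eq_fintype_card,
    Fintype.card_subtype, card_filter, Fintype.sum_prod_type, sum_comm]
  refine sum_congr rfl fun j _ => ?_
  rw [pblocks, card_filter, ← sum_coe_sort P.parts]

theorem card_parts_sub_one_le_sum_pblocks_sub_one [Fintype ι] {G : SimpleGraph V}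
    (hG : G.Preconnected) (hGe : ∀ x y, G.Adj x y → ∃ j, x ∈ e j ∧ y ∈ e j)
    (he : ∀ j, (e j).Nonempty) :
    #P.parts - 1 ≤ ∑ j, (pblocks P (e j) - 1) := by
  obtain hP | ⟨B, hB⟩ := P.parts.eq_empty_or_nonempty
  · simp [hP]
  have hconn : (P.blockIncidenceGraph e).Connected :=
    (connected_iff _).2 ⟨preconnected_blockIncidenceGraph hG hGe he, ⟨.inl ⟨B, hB⟩⟩⟩
  have hcard := hconn.card_vert_le_card_edgeSet_add_one
  rw [card_edgeSet_blockIncidenceGraph, Nat.card_sum, Nat.card_eq_fintype_card,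
    Fintype.card_coe, Nat.card_eq_fintype_card] at hcard
  have hpos : ∀ j, 1 ≤ pblocks P (e j) := fun j => by
    obtain ⟨x, hx⟩ := he j
    exact card_pos.2 ⟨_, mem_filter.2 ⟨(P.blockOf x).2, x, mem_inter.2 ⟨P.mem_blockOf x, hx⟩⟩⟩
  rw [sum_tsub_distrib _ fun j _ => hpos j]
  simp only [sum_const, card_univ, smul_eq_mul, mul_one]
  omega

end Finpartition

theorem stmt9_general {V : Type*} [Fintype V] [DecidableEq V]
    (P : Finpartition (Finset.univ : Finset V))
    (T : Finset (Sym2 V)) (hT : IsTreeOn (Finset.univ : Finset V) T)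
    (m : ℕ) (A : Fin m → Finset (Sym2 V)) (e : Fin m → Finset V)
    (he : ∀ j, 2 ≤ (e j).card)
    (hsub : ∀ j, ∀ s ∈ A j, ∀ v ∈ s, v ∈ e j)
    (hcover : T = Finset.univ.biUnion A) :
    P.parts.card - 1 ≤ ∑ j, (pblocks P (e j) - 1) := by
  refine P.card_parts_sub_one_le_sum_pblocks_sub_one
    (G := SimpleGraph.fromEdgeSet T) (fun x y => hT.2.2.2 x (mem_univ x) y (mem_univ y))
    (fun x y hxy => ?_) (fun j => card_pos.1 (by linarith [he j]))
  obtain ⟨hxyT, -⟩ := (SimpleGraph.fromEdgeSet_adj _).1 hxy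
  rw [hcover] at hxyT
  obtain ⟨j, -, hj⟩ := mem_biUnion.1 hxyT
  exact ⟨j, hsub j _ hj x (Sym2.mem_mk_left x y), hsub j _ hj y (Sym2.mem_mk_right x y)⟩

/-- layer quotient rank.  If the edge set of a spanning tree `T` of `V`
is partitioned into classes `A₁, …, A_m` with the edges of `A_j` having both endpoints in
`e_j` (`|e_j| ≥ 2`), then for any partition `𝒫` of `V` with `s` blocks,
`s - 1 ≤ ∑_j (p_𝒫(e_j) - 1)`. -/
theorem stmt9 {V : Type*} [Fintype V] [DecidableEq V]
    (P : Finpartition (Finset.univ : Finset V))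
    (T : Finset (Sym2 V)) (hT : IsTreeOn (Finset.univ : Finset V) T)
    (m : ℕ) (A : Fin m → Finset (Sym2 V)) (e : Fin m → Finset V)
    (he : ∀ j, 2 ≤ (e j).card)
    (hsub : ∀ j, ∀ s ∈ A j, ∀ v ∈ s, v ∈ e j)
    (hdisj : ∀ j j', j ≠ j' → Disjoint (A j) (A j'))
    (hcover : T = Finset.univ.biUnion A) :
    P.parts.card - 1 ≤ ∑ j, (pblocks P (e j) - 1) :=
  stmt9_general P T hT m A e he hsub hcover

end
end

section
/- Let H be a labelled multihypergraph on a finite vertex set V, all hyperedges of size at least 2, and suppose its edge family is partitioned into classes E_0, …, E_{k−1} such that for each i ∈ {0, …, k−1} there is a spanning tree T_i of V whose edge set is the disjoint union, over e ∈ E_i, of the edge sets of trees F_e with vertex set e. Then H is k-weakly-partition-connected: for every partition 𝒫 of V, Σ_{e∈E(H)}(p_𝒫(e) − 1) ≥ k(|𝒫| − 1). -/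
open scoped Classical
noncomputable section

variable {W : Type*}

lemma absorb_aux {β ι' : Type*} [DecidableEq β] [DecidableEq ι'] (X : Finset β) (S : ι' → Finset β)
    (hSX : ∀ i, S i ⊆ X) :
    ∀ n (J : Finset ι'), J.card ≤ n → ∀ C : Finset β, C ⊆ X →
    (∀ A : Finset β, C ⊆ A → A ⊆ X → (X \ A).Nonempty →
        ∃ i ∈ J, ((S i) ∩ A).Nonempty ∧ ((S i) \ A).Nonempty) →
    X.card ≤ C.card + ∑ i ∈ J, ((S i).card - 1) := by
  intro n
  induction n with
  | zero =>
    intro J hJ C hCX hconn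
    by_cases hXC : X ⊆ C
    · exact le_add_of_le_of_nonneg (Finset.card_le_card hXC) (Nat.zero_le _)
    · obtain ⟨i, hiJ, -⟩ := hconn C Finset.Subset.rfl hCX (Finset.sdiff_nonempty.mpr hXC)
      simp [Finset.card_eq_zero.mp (Nat.le_zero.mp hJ)] at hiJ
  | succ n ih =>
    intro J hJ C hCX hconn
    by_cases hXC : X ⊆ C
    · exact le_add_of_le_of_nonneg (Finset.card_le_card hXC) (Nat.zero_le _)
    · obtain ⟨i, hiJ, ⟨b, hb⟩, hdiff⟩ :=
        hconn C Finset.Subset.rfl hCX (Finset.sdiff_nonempty.mpr hXC)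
      have herase : (J.erase i).card ≤ n := by
        have h1 := Finset.card_erase_of_mem hiJ
        have h2 : 1 ≤ J.card := Finset.card_pos.mpr ⟨i, hiJ⟩
        omega
      have hC'X : C ∪ S i ⊆ X := Finset.union_subset hCX (hSX i)
      have hconn' : ∀ A : Finset β, C ∪ S i ⊆ A → A ⊆ X → (X \ A).Nonempty →
          ∃ i' ∈ J.erase i, ((S i') ∩ A).Nonempty ∧ ((S i') \ A).Nonempty := by
        intro A hA hAX hXA
        obtain ⟨i', hi', h1, h2⟩ := hconn A (Finset.union_subset_iff.mp hA).1 hAX hXA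
        refine ⟨i', Finset.mem_erase.mpr ⟨?_, hi'⟩, h1, h2⟩
        rintro rfl
        obtain ⟨y, hy⟩ := h2
        rw [Finset.mem_sdiff] at hy
        exact hy.2 (hA (Finset.mem_union_right _ hy.1))
      have key := ih (J.erase i) herase (C ∪ S i) hC'X hconn'
      have hcard : (C ∪ S i).card ≤ C.card + ((S i).card - 1) := by
        have h1 : C ∪ S i = C ∪ (S i \ C) := by
          rw [Finset.union_sdiff_self_eq_union]
        have h3 : (C ∪ S i).card = C.card + (S i \ C).card := by
          rw [h1, Finset.card_union_of_disjoint Finset.disjoint_sdiff]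
        have h4 : S i \ C ⊆ (S i).erase b := by
          intro x hx
          rw [Finset.mem_sdiff] at hx
          refine Finset.mem_erase.mpr ⟨?_, hx.1⟩
          rintro rfl
          exact hx.2 (Finset.mem_inter.mp hb).2
        have h5 : (S i \ C).card ≤ (S i).card - 1 := by
          calc (S i \ C).card ≤ ((S i).erase b).card := Finset.card_le_card h4
            _ = (S i).card - 1 := Finset.card_erase_of_mem (Finset.mem_inter.mp hb).1
        omega
      have hsum : ∑ x ∈ J.erase i, ((S x).card - 1) + ((S i).card - 1)
          = ∑ x ∈ J, ((S x).card - 1) := Finset.sum_erase_add J _ hiJ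
      omega

lemma walk_cross_aux {α : Type*} {G : SimpleGraph α} (pr : α → Prop) :
    ∀ {x y : α}, G.Walk x y → pr x → ¬ pr y →
      ∃ u v, G.Adj u v ∧ pr u ∧ ¬ pr v := by
  intro x y w
  induction w with
  | nil => intro h h'; exact absurd h h'
  | @cons a c _ h w ih =>
    intro hx hy
    by_cases hc : pr c
    · exact ih hc hy
    · exact ⟨a, c, h, hx, hc⟩

/-- If the edge family of `H` is partitioned into classes
`E_0, …, E_{k-1}` (via the layer map `ℓ`) such that for each layer `i` there is a spanning
tree `T_i` of `V` whose edge set is the disjoint union over `e ∈ E_i` of the edge sets of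
trees `F_e` on `e`, then `H` is `k`-weakly-partition-connected. -/
theorem stmt10 {V : Type*} [Fintype V] [DecidableEq V] {ι : Type*} [Fintype ι]
    [DecidableEq ι]
    (E : ι → Finset V) (hE : ∀ i, 2 ≤ (E i).card) (k : ℕ)
    (ℓ : ι → Fin k) (F : ι → Finset (Sym2 V)) (T : Fin k → Finset (Sym2 V))
    (hF : ∀ i, IsTreeOn (E i) (F i))
    (hT : ∀ j, IsTreeOn (Finset.univ : Finset V) (T j))
    (hdisj : ∀ i i', i ≠ i' → ℓ i = ℓ i' → Disjoint (F i) (F i'))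
    (hTeq : ∀ j, T j = (Finset.univ.filter fun i => ℓ i = j).biUnion F) :
    WeaklyPC (Finset.univ : Finset V) E k := by
  intro P
  by_cases hP : P.parts.Nonempty
  · obtain ⟨B₀, hB₀⟩ := hP
    set S : ι → Finset (Finset V) := fun i => P.parts.filter fun B => (B ∩ E i).Nonempty with hS
    have layer : ∀ j : Fin k, P.parts.card - 1 ≤
        ∑ i ∈ Finset.univ.filter (fun i => ℓ i = j), (pblocks P (E i) - 1) := by
      intro j
      have hconn : ∀ A : Finset (Finset V), {B₀} ⊆ A → A ⊆ P.parts → (P.parts \ A).Nonempty →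
          ∃ i ∈ Finset.univ.filter (fun i => ℓ i = j),
            ((S i) ∩ A).Nonempty ∧ ((S i) \ A).Nonempty := by
        rintro A hB₀A hAP ⟨B', hB'⟩
        rw [Finset.mem_sdiff] at hB'
        obtain ⟨x, hx⟩ := P.nonempty_of_mem_parts hB₀
        obtain ⟨y, hy⟩ := P.nonempty_of_mem_parts hB'.1
        set pr : V → Prop := fun v => ∃ B ∈ A, v ∈ B with hpr
        have hprx : pr x := ⟨B₀, hB₀A (Finset.mem_singleton_self B₀), hx⟩
        have hpry : ¬ pr y := by
          rintro ⟨B, hBA, hyB⟩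
          exact hB'.2 ((P.eq_of_mem_parts (hAP hBA) hB'.1 hyB hy) ▸ hBA)
        obtain ⟨u, v, huv, hu, hv⟩ := walk_cross_aux pr
          (((hT j).2.2.2 x (Finset.mem_univ x) y (Finset.mem_univ y)).some) hprx hpry
        rw [SimpleGraph.fromEdgeSet_adj] at huv
        have hmem : s(u,v) ∈ T j := huv.1
        rw [hTeq j, Finset.mem_biUnion] at hmem
        obtain ⟨i, hi, hFi⟩ := hmem
        have huE : u ∈ E i := (hF i).2.1 _ hFi u (Sym2.mem_mk_left u v)
        have hvE : v ∈ E i := (hF i).2.1 _ hFi v (Sym2.mem_mk_right u v)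
        refine ⟨i, hi, ?_, ?_⟩
        · obtain ⟨Bu, hBuA, huBu⟩ := hu
          exact ⟨Bu, Finset.mem_inter.mpr ⟨Finset.mem_filter.mpr
            ⟨hAP hBuA, ⟨u, Finset.mem_inter.mpr ⟨huBu, huE⟩⟩⟩, hBuA⟩⟩
        · obtain ⟨Bv, hBvP, hvBv⟩ := P.exists_mem (Finset.mem_univ v)
          exact ⟨Bv, Finset.mem_sdiff.mpr ⟨Finset.mem_filter.mpr
            ⟨hBvP, ⟨v, Finset.mem_inter.mpr ⟨hvBv, hvE⟩⟩⟩,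
            fun hBvA => hv ⟨Bv, hBvA, hvBv⟩⟩⟩
      have key := absorb_aux P.parts S (fun i => Finset.filter_subset _ _)
        (Finset.univ.filter (fun i => ℓ i = j)).card _ le_rfl {B₀}
        (Finset.singleton_subset_iff.mpr hB₀) hconn
      rw [Finset.card_singleton] at key
      have heq : ∑ i ∈ Finset.univ.filter (fun i => ℓ i = j), ((S i).card - 1)
          = ∑ i ∈ Finset.univ.filter (fun i => ℓ i = j), (pblocks P (E i) - 1) := rfl
      omega
    calc k * (P.parts.card - 1) = ∑ _j : Fin k, (P.parts.card - 1) := by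
          simp [Finset.sum_const, mul_comm]
      _ ≤ ∑ j : Fin k, ∑ i ∈ Finset.univ.filter (fun i => ℓ i = j), (pblocks P (E i) - 1) :=
          Finset.sum_le_sum (fun j _ => layer j)
      _ = ∑ i, (pblocks P (E i) - 1) :=
          Finset.sum_fiberwise_of_maps_to (fun i _ => Finset.mem_univ _) _
  · rw [Finset.not_nonempty_iff_eq_empty] at hP
    simp [hP]

end
end

section
/- Let H be a labelled multihypergraph on a finite vertex set V with all hyperedges of size at least 2, let G = ⨄_{e} F_e be a tree assignment of H, let 𝒯 = (T_0, …, T_{k−1}) be a k-tree decomposition of G, and let ℓ : E(H) → {0, …, k−1} be a map such that E(F_e) ⊆ E(T_{ℓ(e)}) for every hyperedge e, and |e| = 2 whenever 1 ≤ ℓ(e) ≤ k − 2. Then 𝒯 is the unique k-tree decomposition of G with signature sig_𝒯: every k-tree decomposition 𝒯′ of G with sig_{𝒯′} = sig_𝒯 satisfies 𝒯′ = 𝒯 as an ordered tuple. -/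
open scoped Classical
noncomputable section

variable {W : Type*}

/-- If `𝒯` is a `k`-tree decomposition of a tree assignment `G = ⨄ F_e`
of `H` and `ℓ` is a layer map with `E(F_e) ⊆ E(T_{ℓ(e)})` for all `e` and `|e| = 2`
whenever `1 ≤ ℓ(e) ≤ k - 2`, then `𝒯` is the unique `k`-tree decomposition of `G` with
its signature. -/
theorem stmt11 {V : Type*} [Fintype V] [DecidableEq V] {ι : Type*} [Fintype ι]
    [DecidableEq ι]
    (E : ι → Finset V) (hE : ∀ i, 2 ≤ (E i).card) (k : ℕ)
    (F : ι → Finset (Sym2 V)) (hF : ∀ i, IsTreeOn (E i) (F i))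
    (D : KTreeDecomp (Finset.univ : Finset V) F k) (ℓ : ι → Fin k)
    (hcont : ∀ i, ∀ s ∈ F i, D.layer (i, s) = ℓ i)
    (hrank : ∀ i, 1 ≤ (ℓ i).1 → (ℓ i).1 ≤ k - 2 → (E i).card = 2) :
    ∀ D' : KTreeDecomp (Finset.univ : Finset V) F k,
      (∀ i, sig D' i = sig D i) → ∀ p ∈ LEdges F, D'.layer p = D.layer p := by
  intro D' hsig p hp
  simp only [LEdges, Finset.mem_biUnion, Finset.mem_image, Finset.mem_univ, true_and] at hp
  obtain ⟨i, s, hs, rfl⟩ := hp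
  rw [hcont i s hs]
  -- notation for fiber cardinalities of D'
  set c : Fin k → ℕ := fun j => ((F i).filter fun t => D'.layer (i, t) = j).card with hc
  have hsigD : sig D i = (ℓ i).1 * (F i).card := by
    unfold sig
    rw [Finset.sum_eq_single (ℓ i)]
    · congr 2
      apply Finset.filter_true_of_mem
      intro t ht
      exact hcont i t ht
    · intro j _ hj
      have : ((F i).filter fun t => D.layer (i, t) = j) = ∅ := by
        apply Finset.filter_false_of_mem
        intro t ht h
        exact hj (h ▸ hcont i t ht)
      simp [this]
    · simp
  have hsig' : ∑ j : Fin k, j.1 * c j = (ℓ i).1 * (F i).card := by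
    rw [← hsigD, ← hsig i]; rfl
  have hpart : ∑ j : Fin k, c j = (F i).card :=
    (Finset.card_eq_sum_card_fiberwise (f := fun t => D'.layer (i, t))
      (fun t _ => Finset.mem_univ _)).symm
  have hcpos : 1 ≤ c (D'.layer (i, s)) := by
    have : s ∈ (F i).filter fun t => D'.layer (i, t) = D'.layer (i, s) := by
      simp [hs]
    exact Finset.card_pos.mpr ⟨s, this⟩
  by_cases h0 : (ℓ i).1 = 0
  · -- signature 0 : all edges in layer 0
    have hle : (D'.layer (i, s)).1 * c (D'.layer (i, s)) ≤ ∑ j : Fin k, j.1 * c j :=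
      Finset.single_le_sum (f := fun j : Fin k => j.1 * c j)
        (fun j _ => Nat.zero_le _) (Finset.mem_univ _)
    rw [hsig', h0, Nat.zero_mul, Nat.le_zero, Nat.mul_eq_zero] at hle
    apply Fin.ext
    rw [h0]
    rcases hle with h | h
    · exact h
    · omega
  · by_cases hk1 : (ℓ i).1 = k - 1
    · -- signature maximal : all edges in layer k - 1
      have hzero : ∑ j : Fin k, (k - 1 - j.1) * c j = 0 := by
        have hsum : ∑ j : Fin k, ((k - 1 - j.1) * c j + j.1 * c j) =
            ∑ j : Fin k, (k - 1) * c j := by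
          apply Finset.sum_congr rfl
          intro j _
          rw [← Nat.add_mul, Nat.sub_add_cancel (by omega : j.1 ≤ k - 1)]
        rw [Finset.sum_add_distrib, hsig', ← Finset.mul_sum, hpart, hk1] at hsum
        omega
      have := (Finset.sum_eq_zero_iff.mp hzero) (D'.layer (i, s)) (Finset.mem_univ _)
      rcases Nat.mul_eq_zero.mp this with h | h
      · apply Fin.ext
        have hlt := (D'.layer (i, s)).2
        omega
      · omega
    · -- middle layer : F i is a single edge
      have hlb : 1 ≤ (ℓ i).1 := by omega
      have hub : (ℓ i).1 ≤ k - 2 := by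
        have := (ℓ i).2; omega
      have hcard2 : (E i).card = 2 := hrank i hlb hub
      obtain ⟨x, y, hxy, hExy⟩ := Finset.card_eq_two.mp hcard2
      obtain ⟨hdiag, hmem, -, -⟩ := hF i
      have hsingle : ∀ t ∈ F i, t = s(x, y) := by
        intro t ht
        induction t with
        | h a b =>
          have ha : a ∈ E i := hmem _ ht a (by simp)
          have hb : b ∈ E i := hmem _ ht b (by simp)
          have hab : a ≠ b := by
            intro h; exact hdiag _ ht (by simp [h])
          rw [hExy] at ha hb
          simp only [Finset.mem_insert, Finset.mem_singleton] at ha hb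
          rcases ha with rfl | rfl <;> rcases hb with rfl | rfl <;>
            first | exact absurd rfl hab | simp [Sym2.eq_swap]
      have hFi : F i = {s(x, y)} := by
        apply Finset.eq_singleton_iff_unique_mem.mpr
        exact ⟨(hsingle s hs) ▸ hs, hsingle⟩
      have hseq : s = s(x, y) := hsingle s hs
      have hval : ∀ (D₀ : KTreeDecomp (Finset.univ : Finset V) F k),
          sig D₀ i = (D₀.layer (i, s)).1 := by
        intro D₀
        unfold sig
        rw [Finset.sum_eq_single (D₀.layer (i, s))]
        · rw [hFi, Finset.filter_singleton, if_pos (by rw [← hseq])]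
          simp
        · intro j _ hj
          have hne : ¬ D₀.layer (i, s(x, y)) = j := by
            rw [← hseq]; exact fun h => hj h.symm
          rw [hFi, Finset.filter_singleton, if_neg hne]
          simp
        · simp
      have : (D'.layer (i, s)).1 = (D.layer (i, s)).1 := by
        rw [← hval D', ← hval D, hsig i]
      apply Fin.ext
      rw [this, hcont i s hs]

end
end

section
/- Let H⁽¹⁾ and H⁽²⁾ be labelled multihypergraphs on finite vertex sets V₁ and V₂ with V₁ ∩ V₂ = {r} and disjoint edge families, each k-critical and each admitting a two-sided star certificate. Then the one-vertex sum H = H⁽¹⁾ ∨_r H⁽²⁾ is k-critical and admits a two-sided star certificate; in particular H is k-weakly-partition-connected and has a k-distinguishable tree assignment. -/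
open scoped Classical
noncomputable section

variable {W : Type*}

/-- A two-sided star certificate for the hypergraph `(U, E)`: a star-minimal tree
assignment `F`, a `k`-tree decomposition `D` of its labelled union, and a layer map
`lmap` with `E(F_e) ⊆ E(T_{lmap e})` for all `e`, and `|e| = 2` whenever
`1 ≤ lmap e ≤ k - 2`. -/
structure TwoSidedStarCert [DecidableEq W] {ι : Type*} [Fintype ι] [DecidableEq ι]
    (U : Finset W) (E : ι → Finset W) (k : ℕ) where
  F : ι → Finset (Sym2 W)
  F_tree : ∀ i, IsTreeOn (E i) (F i)
  F_star : ∀ i, ∃ c ∈ E i, F i = starOn (E i) c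
  D : KTreeDecomp U F k
  lmap : ι → Fin k
  contained : ∀ i, ∀ s ∈ F i, D.layer (i, s) = lmap i
  interior_rank_two : ∀ i, 1 ≤ (lmap i).1 → (lmap i).1 ≤ k - 2 → (E i).card = 2

/-!
The layer-`j` trees of the two certificates meet only in `r`, so their union is a spanning tree
of `V₁ ∪ V₂`: collapsing `V₂` onto `r` shows that every edge of the first tree is still a bridge
of the union. Everything else in the certificates is combined side by side, and
criticality adds up because `|V₁ ∪ V₂| - 1 = (|V₁| - 1) + (|V₂| - 1)`.

Any two-sided star certificate gives the remaining two properties. For a partition `𝒫`, the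
layer-`j` tree connects all blocks using only hyperedges of layer `j`, and a hyperedge `e` merges
at most `p_𝒫(e) - 1` blocks; summing over the `k` layers gives weak partition connectivity. For
distinguishability, a hyperedge of layer `0` or `k - 1` has the extreme signature, which forces
all its edges back into that layer, while a hyperedge of an intermediate layer is a single edge,
whose signature is its layer.
-/

namespace SimpleGraph

lemma Reachable.map_of_adj {V V' : Type*} {G : SimpleGraph V} {G' : SimpleGraph V'} (f : V → V')
    (hf : ∀ a b, G.Adj a b → G'.Reachable (f a) (f b)) {x y : V} (h : G.Reachable x y) :
    G'.Reachable (f x) (f y) := by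
  rw [reachable_iff_reflTransGen] at h ⊢
  exact Relation.ReflTransGen.lift' f (fun a b hab => (reachable_iff_reflTransGen _ _).1
    (hf a b hab)) _ _ h

lemma IsBridge.sup_of_inter_subset_singleton {G₁ G₂ : SimpleGraph W} {V₁ V₂ : Set W} {r : W}
    (hV : V₁ ∩ V₂ ⊆ {r}) (h₁ : ∀ a b, G₁.Adj a b → a ∈ V₁) (h₂ : ∀ a b, G₂.Adj a b → a ∈ V₂)
    {u v : W} (huv : G₁.Adj u v) (hb : G₁.IsBridge s(u, v)) : (G₁ ⊔ G₂).IsBridge s(u, v) := by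
  classical
  let π : W → W := fun x => if x ∈ V₁ then x else r
  have hπ₂ : ∀ x ∈ V₂, π x = r := fun x hx => by
    by_cases hx₁ : x ∈ V₁
    · simpa [π, hx₁] using hV ⟨hx₁, hx⟩
    · simp [π, hx₁]
  have hπ₁ : ∀ x ∈ V₁, π x = x := fun x hx => if_pos hx
  rw [isBridge_iff] at hb ⊢
  intro hre
  apply hb
  have hmap := hre.map_of_adj π fun a b hab => by
    rw [deleteEdges_adj, sup_adj] at hab
    rcases hab with ⟨hab | hab, hne⟩
    · rw [hπ₁ a (h₁ a b hab), hπ₁ b (h₁ b a hab.symm)]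
      exact Adj.reachable (deleteEdges_adj.2 ⟨hab, hne⟩)
    · rw [hπ₂ a (h₂ a b hab), hπ₂ b (h₂ b a hab.symm)]
  rwa [hπ₁ u (h₁ u v huv), hπ₁ v (h₁ v u huv.symm)] at hmap

lemma IsAcyclic.sup_of_inter_subset_singleton {G₁ G₂ : SimpleGraph W} {V₁ V₂ : Set W} {r : W}
    (hV : V₁ ∩ V₂ ⊆ {r}) (h₁ : ∀ a b, G₁.Adj a b → a ∈ V₁) (h₂ : ∀ a b, G₂.Adj a b → a ∈ V₂)
    (hG₁ : G₁.IsAcyclic) (hG₂ : G₂.IsAcyclic) : (G₁ ⊔ G₂).IsAcyclic := by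
  rw [isAcyclic_iff_forall_adj_isBridge] at hG₁ hG₂ ⊢
  rintro u v (huv | huv)
  · exact (hG₁ huv).sup_of_inter_subset_singleton hV h₁ h₂ huv
  · rw [sup_comm]
    exact (hG₂ huv).sup_of_inter_subset_singleton (Set.inter_comm V₁ V₂ ▸ hV) h₂ h₁ huv

end SimpleGraph

lemma IsTreeOn.adj_mem {e : Finset W} {A : Finset (Sym2 W)} (h : IsTreeOn e A) {a b : W}
    (hab : (SimpleGraph.fromEdgeSet (A : Set (Sym2 W))).Adj a b) : a ∈ e :=
  h.2.1 _ ((SimpleGraph.fromEdgeSet_adj _).1 hab).1 a (Sym2.mem_mk_left a b)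

lemma IsTreeOn.union_of_inter_eq_singleton [DecidableEq W] {V₁ V₂ : Finset W} {r : W}
    (hr : V₁ ∩ V₂ = {r}) {A₁ A₂ : Finset (Sym2 W)} (h₁ : IsTreeOn V₁ A₁) (h₂ : IsTreeOn V₂ A₂) :
    IsTreeOn (V₁ ∪ V₂) (A₁ ∪ A₂) := by
  obtain ⟨hr₁, hr₂⟩ := Finset.mem_inter.1 (hr ▸ Finset.mem_singleton_self r : r ∈ V₁ ∩ V₂)
  refine ⟨?_, ?_, ?_, ?_⟩
  · simp only [Finset.mem_union]
    rintro s (hs | hs)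
    exacts [h₁.1 s hs, h₂.1 s hs]
  · simp only [Finset.mem_union]
    rintro s (hs | hs) v hv
    exacts [.inl (h₁.2.1 s hs v hv), .inr (h₂.2.1 s hs v hv)]
  · rw [Finset.coe_union, SimpleGraph.fromEdgeSet_union]
    refine h₁.2.2.1.sup_of_inter_subset_singleton (V₁ := ↑V₁) (V₂ := ↑V₂) (r := r) ?_
      (fun _ _ => h₁.adj_mem) (fun _ _ => h₂.adj_mem) h₂.2.2.1
    rw [← Finset.coe_inter, hr, Finset.coe_singleton]
  · have hreach : ∀ x ∈ V₁ ∪ V₂,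
        (SimpleGraph.fromEdgeSet (↑(A₁ ∪ A₂) : Set (Sym2 W))).Reachable x r := by
      rw [Finset.coe_union, SimpleGraph.fromEdgeSet_union]
      intro x hx
      rcases Finset.mem_union.1 hx with hx | hx
      · exact (h₁.2.2.2 x hx r hr₁).mono le_sup_left
      · exact (h₂.2.2.2 x hx r hr₂).mono le_sup_right
    exact fun x hx y hy => (hreach x hx).trans (hreach y hy).symm

open Finset in
/-- A star on each `M i` gives a connected graph on `β` with at most `∑ i ∈ S, (#(M i) - 1)`
edges. -/
lemma card_le_sum_card_sub_one_of_reflTransGen {β ι : Type*} (S : Finset ι) (M : ι → Finset β)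
    (hconn : ∀ x y, Relation.ReflTransGen (fun a b => ∃ i ∈ S, a ∈ M i ∧ b ∈ M i) x y) :
    Nat.card β ≤ ∑ i ∈ S, (#(M i) - 1) + 1 := by
  classical
  rcases isEmpty_or_nonempty β with hβ | hβ
  · simp
  choose c hc using fun i => show ∃ c, (M i).Nonempty → c ∈ M i from
    if h : (M i).Nonempty then ⟨h.choose, fun _ => h.choose_spec⟩ else ⟨hβ.some, h.elim⟩
  let X : Finset (Sym2 β) := S.biUnion fun i => ((M i).erase (c i)).image (s(c i, ·))
  let G := SimpleGraph.fromEdgeSet (X : Set (Sym2 β))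
  have hstar : ∀ i ∈ S, ∀ b ∈ M i, G.Reachable (c i) b := by
    intro i hi b hb
    by_cases hbc : b = c i
    · rw [hbc]
    refine SimpleGraph.Adj.reachable ((SimpleGraph.fromEdgeSet_adj _).2 ⟨?_, Ne.symm hbc⟩)
    exact mem_biUnion.2 ⟨i, hi, mem_image_of_mem _ (mem_erase.2 ⟨hbc, hb⟩)⟩
  have hG : G.Connected := ⟨fun x y => (SimpleGraph.reachable_iff_reflTransGen x y).2 <|
    Relation.ReflTransGen.lift' id (fun a b ⟨i, hi, ha, hb⟩ =>
      (SimpleGraph.reachable_iff_reflTransGen _ _).1 ((hstar i hi a ha).symm.trans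
        (hstar i hi b hb))) x y (hconn x y)⟩
  have hedges : Nat.card G.edgeSet ≤ ∑ i ∈ S, (#(M i) - 1) := by
    calc Nat.card G.edgeSet ≤ #X := by
          rw [← Set.ncard_coe_finset, ← Nat.card_coe_set_eq, SimpleGraph.edgeSet_fromEdgeSet]
          exact Set.ncard_le_ncard Set.sdiff_subset X.finite_toSet
      _ ≤ ∑ i ∈ S, #((M i).erase (c i)) :=
          card_biUnion_le.trans (sum_le_sum fun i _ => card_image_le)
      _ ≤ ∑ i ∈ S, (#(M i) - 1) := sum_le_sum fun i _ => by
          rcases (M i).eq_empty_or_nonempty with h | h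
          · simp [h]
          · rw [card_erase_of_mem (hc i h)]
  have := hG.card_vert_le_card_edgeSet_add_one
  omega

open Finset in
lemma card_parts_le_sum_pblocks [DecidableEq W] {ι : Type*} {U : Finset W} (P : Finpartition U)
    {A : Finset (Sym2 W)} (hAU : ∀ s ∈ A, ∀ v ∈ s, v ∈ U)
    (hconn : ∀ x ∈ U, ∀ y ∈ U, (SimpleGraph.fromEdgeSet (A : Set (Sym2 W))).Reachable x y)
    (S : Finset ι) (E : ι → Finset W) (hcover : ∀ s ∈ A, ∃ i ∈ S, ∀ v ∈ s, v ∈ E i) :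
    #P.parts ≤ ∑ i ∈ S, (pblocks P (E i) - 1) + 1 := by
  rcases P.parts.eq_empty_or_nonempty with hP | ⟨B₀, hB₀⟩
  · simp [hP]
  let meets (i : ι) : Finset P.parts := univ.filter fun B => (B.1 ∩ E i).Nonempty
  have hmeets (i : ι) : #(meets i) = pblocks P (E i) := by
    rw [pblocks, card_filter, card_filter,
      sum_coe_sort P.parts fun B => if (B ∩ E i).Nonempty then 1 else 0]
  let block (x : W) : P.parts := if hx : x ∈ U then ⟨P.part x, P.part_mem.2 hx⟩ else ⟨B₀, hB₀⟩
  have hblock {x : W} (hx : x ∈ U) {i : ι} (hxi : x ∈ E i) : block x ∈ meets i := by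
    simp only [meets, block, dif_pos hx, mem_filter, mem_univ, true_and]
    exact ⟨x, mem_inter.2 ⟨P.mem_part hx, hxi⟩⟩
  have hblock_eq {B : P.parts} {x : W} (hx : x ∈ B.1) : block x = B :=
    Subtype.ext (by simp [block, P.le B.2 hx, P.part_eq_of_mem B.2 hx])
  calc #P.parts = Nat.card P.parts := by simp
    _ ≤ ∑ i ∈ S, (#(meets i) - 1) + 1 := card_le_sum_card_sub_one_of_reflTransGen S meets ?_
    _ = ∑ i ∈ S, (pblocks P (E i) - 1) + 1 := by simp only [hmeets]
  intro B B'
  obtain ⟨x, hx⟩ := P.nonempty_of_mem_parts B.2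
  obtain ⟨y, hy⟩ := P.nonempty_of_mem_parts B'.2
  rw [← hblock_eq hx, ← hblock_eq hy]
  refine Relation.ReflTransGen.lift' block (fun a b hab => .single ?_) x y
    ((SimpleGraph.reachable_iff_reflTransGen x y).1 (hconn x (P.le B.2 hx) y (P.le B'.2 hy)))
  obtain ⟨hs, -⟩ := (SimpleGraph.fromEdgeSet_adj _).1 hab
  obtain ⟨i, hi, hiE⟩ := hcover _ hs
  exact ⟨i, hi, hblock (hAU _ hs a (Sym2.mem_mk_left a b)) (hiE a (Sym2.mem_mk_left a b)),
    hblock (hAU _ hs b (Sym2.mem_mk_right a b)) (hiE b (Sym2.mem_mk_right a b))⟩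

lemma mem_LEdges [DecidableEq W] {ι : Type*} [Fintype ι] [DecidableEq ι]
    {F : ι → Finset (Sym2 W)} {p : ι × Sym2 W} : p ∈ LEdges F ↔ p.2 ∈ F p.1 := by
  obtain ⟨i, s⟩ := p
  simp [LEdges]

section TreeDecomposition

variable [DecidableEq W] {ι : Type*} [Fintype ι] [DecidableEq ι] {U : Finset W}
  {F : ι → Finset (Sym2 W)} {k : ℕ}

namespace KTreeDecomp

variable (D : KTreeDecomp U F k)

lemma mem_tree_layer {i : ι} {s : Sym2 W} (hs : s ∈ F i) : s ∈ D.tree (D.layer (i, s)) := by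
  rw [D.tree_eq]
  exact Finset.mem_image.2 ⟨(i, s), Finset.mem_filter.2 ⟨mem_LEdges.2 hs, rfl⟩, rfl⟩

lemma exists_of_mem_tree {j : Fin k} {s : Sym2 W} (hs : s ∈ D.tree j) :
    ∃ i, s ∈ F i ∧ D.layer (i, s) = j := by
  rw [D.tree_eq] at hs
  obtain ⟨⟨i, s⟩, hp, rfl⟩ := Finset.mem_image.1 hs
  obtain ⟨hL, rfl⟩ := Finset.mem_filter.1 hp
  exact ⟨i, mem_LEdges.1 hL, rfl⟩

lemma sig_eq_sum_layer (i : ι) : sig D i = ∑ s ∈ F i, (D.layer (i, s)).1 := by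
  rw [sig, ← Finset.sum_fiberwise (F i) (fun s => D.layer (i, s))]
  refine Finset.sum_congr rfl fun j _ => ?_
  rw [Finset.sum_congr rfl fun s hs => congrArg Fin.val (Finset.mem_filter.1 hs).2,
    Finset.sum_const, smul_eq_mul, mul_comm]

end KTreeDecomp

open Finset in
lemma weaklyPC_of_layerMap {E : ι → Finset W} (hF : ∀ i, ∀ s ∈ F i, ∀ v ∈ s, v ∈ E i)
    (D : KTreeDecomp U F k) (lmap : ι → Fin k) (hlmap : ∀ i, ∀ s ∈ F i, D.layer (i, s) = lmap i) :
    WeaklyPC U E k := by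
  intro P
  have hlayer (j : Fin k) :
      #P.parts ≤ ∑ i ∈ univ.filter (lmap · = j), (pblocks P (E i) - 1) + 1 := by
    refine card_parts_le_sum_pblocks P (D.tree_isTree j).2.1 (D.tree_isTree j).2.2.2 _ E
      fun s hs => ?_
    obtain ⟨i, hi, rfl⟩ := D.exists_of_mem_tree hs
    exact ⟨i, by simp [hlmap i s hi], hF i s hi⟩
  calc k * (#P.parts - 1) = ∑ _j : Fin k, (#P.parts - 1) := by simp
    _ ≤ ∑ j : Fin k, ∑ i ∈ univ.filter (lmap · = j), (pblocks P (E i) - 1) :=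
        sum_le_sum fun j _ => by have := hlayer j; omega
    _ = ∑ i, (pblocks P (E i) - 1) := sum_fiberwise _ _ _

end TreeDecomposition

lemma IsTreeOn.eq_of_card_eq_two {e : Finset W} {A : Finset (Sym2 W)} (h : IsTreeOn e A)
    (he : e.card = 2) {s t : Sym2 W} (hs : s ∈ A) (ht : t ∈ A) : s = t := by
  obtain ⟨x, y, hxy, rfl⟩ := Finset.card_eq_two.1 he
  have hpair : ∀ u ∈ A, u = s(x, y) := by
    intro u hu
    induction u using Sym2.ind with | _ a b =>
    have hab : a ≠ b := fun hab => h.1 _ hu (Sym2.mk_isDiag_iff.2 hab)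
    have ha := h.2.1 _ hu a (Sym2.mem_mk_left a b)
    have hb := h.2.1 _ hu b (Sym2.mem_mk_right a b)
    simp only [Finset.mem_insert, Finset.mem_singleton] at ha hb
    rcases ha with rfl | rfl <;> rcases hb with rfl | rfl <;> simp_all [Sym2.eq_swap]
  rw [hpair s hs, hpair t ht]

lemma IsTreeOn.disjoint_of_inter_eq_singleton [DecidableEq W] {V₁ V₂ : Finset W} {r : W}
    (hr : V₁ ∩ V₂ = {r}) {A₁ A₂ : Finset (Sym2 W)} (h₁ : IsTreeOn V₁ A₁) (h₂ : IsTreeOn V₂ A₂) :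
    Disjoint A₁ A₂ := by
  refine Finset.disjoint_left.2 fun s hs₁ hs₂ => h₁.1 s hs₁ ?_
  induction s using Sym2.ind with | _ a b =>
  have hboth : ∀ v ∈ s(a, b), v = r := fun v hv => by
    have hv := Finset.mem_inter.2 ⟨h₁.2.1 _ hs₁ v hv, h₂.2.1 _ hs₂ v hv⟩
    rwa [hr, Finset.mem_singleton] at hv
  exact Sym2.mk_isDiag_iff.2 ((hboth a (Sym2.mem_mk_left a b)).trans
    (hboth b (Sym2.mem_mk_right a b)).symm)

namespace KTreeDecomp

variable [DecidableEq W] {ι₁ ι₂ : Type*} [Fintype ι₁] [DecidableEq ι₁] [Fintype ι₂]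
  [DecidableEq ι₂] {V₁ V₂ : Finset W} {r : W} {F₁ : ι₁ → Finset (Sym2 W)}
  {F₂ : ι₂ → Finset (Sym2 W)} {k : ℕ}

def oneVertexSum (hr : V₁ ∩ V₂ = {r}) (D₁ : KTreeDecomp V₁ F₁ k) (D₂ : KTreeDecomp V₂ F₂ k) :
    KTreeDecomp (V₁ ∪ V₂) (Sum.elim F₁ F₂) k where
  layer p := Sum.elim (fun i => D₁.layer (i, p.2)) (fun i => D₂.layer (i, p.2)) p.1
  tree j := D₁.tree j ∪ D₂.tree j
  tree_isTree j := (D₁.tree_isTree j).union_of_inter_eq_singleton hr (D₂.tree_isTree j)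
  tree_eq j := by
    ext s
    simp [D₁.tree_eq, D₂.tree_eq, mem_LEdges]
  layer_inj := by
    have hdisj (j j' : Fin k) : Disjoint (D₁.tree j) (D₂.tree j') :=
      (D₁.tree_isTree j).disjoint_of_inter_eq_singleton hr (D₂.tree_isTree j')
    rintro ⟨i | i, s⟩ hp ⟨i' | i', s'⟩ hq hl (rfl : s = s') <;>
      simp only [mem_LEdges, Sum.elim_inl, Sum.elim_inr] at hp hq hl
    · simpa using D₁.layer_inj (i, s) (mem_LEdges.2 hp) (i', s) (mem_LEdges.2 hq) hl rfl
    · exact (Finset.disjoint_left.1 (hdisj _ _) (D₁.mem_tree_layer hp) (D₂.mem_tree_layer hq)).elim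
    · exact (Finset.disjoint_left.1 (hdisj _ _) (D₁.mem_tree_layer hq) (D₂.mem_tree_layer hp)).elim
    · simpa using D₂.layer_inj (i, s) (mem_LEdges.2 hp) (i', s) (mem_LEdges.2 hq) hl rfl

end KTreeDecomp

namespace TwoSidedStarCert

section

variable [DecidableEq W] {ι : Type*} [Fintype ι] [DecidableEq ι] {U : Finset W}
  {E : ι → Finset W} {k : ℕ}

lemma sig_eq (C : TwoSidedStarCert U E k) (i : ι) : sig C.D i = (C.lmap i).1 * (C.F i).card := by
  rw [C.D.sig_eq_sum_layer, Finset.sum_congr rfl fun s hs => congrArg Fin.val (C.contained i s hs),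
    Finset.sum_const, smul_eq_mul, mul_comm]

lemma layer_eq_of_sig_eq (C : TwoSidedStarCert U E k) {D' : KTreeDecomp U C.F k}
    (hsig : ∀ i, sig D' i = sig C.D i) {i : ι} {s : Sym2 W} (hs : s ∈ C.F i) :
    D'.layer (i, s) = C.lmap i := by
  have hsig' := (D'.sig_eq_sum_layer i).symm.trans ((hsig i).trans (C.sig_eq i))
  apply Fin.ext
  rcases Nat.eq_zero_or_pos (C.lmap i).1 with h0 | hpos
  · rw [h0, zero_mul, Finset.sum_eq_zero_iff] at hsig'
    exact (hsig' s hs).trans h0.symm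
  by_cases htop : (C.lmap i).1 = k - 1
  · rw [htop, mul_comm, ← smul_eq_mul, ← Finset.sum_const] at hsig'
    have hle : ∀ t ∈ C.F i, (D'.layer (i, t)).1 ≤ k - 1 := fun t _ => by omega
    exact ((Finset.sum_eq_sum_iff_of_le hle).1 hsig' s hs).trans htop.symm
  · have hsingle : C.F i = {s} := Finset.eq_singleton_iff_unique_mem.2
      ⟨hs, fun t ht => (C.F_tree i).eq_of_card_eq_two (C.interior_rank_two i hpos (by omega)) ht hs⟩
    rwa [hsingle, Finset.sum_singleton, Finset.card_singleton, mul_one] at hsig'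

lemma distinguishable (C : TwoSidedStarCert U E k) : Distinguishable U E k :=
  ⟨C.F, C.F_tree, C.D, fun _ hsig ⟨i, s⟩ hp =>
    (C.layer_eq_of_sig_eq hsig (mem_LEdges.1 hp)).trans (C.contained i s (mem_LEdges.1 hp)).symm⟩

end

variable [DecidableEq W] {ι₁ ι₂ : Type*} [Fintype ι₁] [DecidableEq ι₁] [Fintype ι₂]
  [DecidableEq ι₂] {V₁ V₂ : Finset W} {r : W} {E₁ : ι₁ → Finset W} {E₂ : ι₂ → Finset W} {k : ℕ}

def oneVertexSum (hr : V₁ ∩ V₂ = {r}) (C₁ : TwoSidedStarCert V₁ E₁ k)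
    (C₂ : TwoSidedStarCert V₂ E₂ k) : TwoSidedStarCert (V₁ ∪ V₂) (Sum.elim E₁ E₂) k where
  F := Sum.elim C₁.F C₂.F
  F_tree := Sum.forall.2 ⟨C₁.F_tree, C₂.F_tree⟩
  F_star := Sum.forall.2 ⟨C₁.F_star, C₂.F_star⟩
  D := C₁.D.oneVertexSum hr C₂.D
  lmap := Sum.elim C₁.lmap C₂.lmap
  contained := Sum.forall.2 ⟨C₁.contained, C₂.contained⟩
  interior_rank_two := Sum.forall.2 ⟨C₁.interior_rank_two, C₂.interior_rank_two⟩

end TwoSidedStarCert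

lemma card_union_sub_one_of_inter_eq_singleton [DecidableEq W] {V₁ V₂ : Finset W} {r : W}
    (hr : V₁ ∩ V₂ = {r}) : (V₁ ∪ V₂).card - 1 = (V₁.card - 1) + (V₂.card - 1) := by
  have hcard := Finset.card_union_add_card_inter V₁ V₂
  obtain ⟨hr₁, hr₂⟩ := Finset.mem_inter.1 (hr ▸ Finset.mem_singleton_self r : r ∈ V₁ ∩ V₂)
  have h₁ : 0 < V₁.card := Finset.card_pos.2 ⟨r, hr₁⟩
  have h₂ : 0 < V₂.card := Finset.card_pos.2 ⟨r, hr₂⟩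
  rw [hr, Finset.card_singleton] at hcard
  omega

theorem stmt14_general {W : Type*} [DecidableEq W]
    {ι₁ ι₂ : Type*} [Fintype ι₁] [DecidableEq ι₁] [Fintype ι₂] [DecidableEq ι₂]
    (V₁ V₂ : Finset W) (r : W) (hr : V₁ ∩ V₂ = {r})
    (E₁ : ι₁ → Finset W) (E₂ : ι₂ → Finset W)
    (k : ℕ)
    (hc₁ : ∑ i, ((E₁ i).card - 1) = k * (V₁.card - 1))
    (hc₂ : ∑ i, ((E₂ i).card - 1) = k * (V₂.card - 1))
    (hcert₁ : Nonempty (TwoSidedStarCert V₁ E₁ k))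
    (hcert₂ : Nonempty (TwoSidedStarCert V₂ E₂ k)) :
    (∑ i : ι₁ ⊕ ι₂, ((Sum.elim E₁ E₂ i).card - 1) = k * ((V₁ ∪ V₂).card - 1)) ∧
    Nonempty (TwoSidedStarCert (V₁ ∪ V₂) (Sum.elim E₁ E₂) k) ∧
    WeaklyPC (V₁ ∪ V₂) (Sum.elim E₁ E₂) k ∧
    Distinguishable (V₁ ∪ V₂) (Sum.elim E₁ E₂) k := by
  obtain ⟨C₁⟩ := hcert₁
  obtain ⟨C₂⟩ := hcert₂
  let C := C₁.oneVertexSum hr C₂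
  refine ⟨?_, ⟨C⟩, weaklyPC_of_layerMap (fun i => (C.F_tree i).2.1) C.D C.lmap C.contained,
    C.distinguishable⟩
  simp only [Fintype.sum_sum_type, Sum.elim_inl, Sum.elim_inr, hc₁, hc₂,
    card_union_sub_one_of_inter_eq_singleton hr, mul_add]

/-- If `H⁽¹⁾` and `H⁽²⁾` are `k`-critical multihypergraphs on `V₁`,
`V₂` with `V₁ ∩ V₂ = {r}`, each with a two-sided star certificate, then their one-vertex
sum is `k`-critical and has a two-sided star certificate; in particular it is
`k`-weakly-partition-connected and has a `k`-distinguishable tree assignment. -/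
theorem stmt14 {W : Type*} [Fintype W] [DecidableEq W]
    {ι₁ ι₂ : Type*} [Fintype ι₁] [DecidableEq ι₁] [Fintype ι₂] [DecidableEq ι₂]
    (V₁ V₂ : Finset W) (r : W) (hr : V₁ ∩ V₂ = {r})
    (E₁ : ι₁ → Finset W) (E₂ : ι₂ → Finset W)
    (hE₁sub : ∀ i, E₁ i ⊆ V₁) (hE₂sub : ∀ i, E₂ i ⊆ V₂)
    (hE₁ : ∀ i, 2 ≤ (E₁ i).card) (hE₂ : ∀ i, 2 ≤ (E₂ i).card)
    (k : ℕ)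
    (hc₁ : ∑ i, ((E₁ i).card - 1) = k * (V₁.card - 1))
    (hc₂ : ∑ i, ((E₂ i).card - 1) = k * (V₂.card - 1))
    (hcert₁ : Nonempty (TwoSidedStarCert V₁ E₁ k))
    (hcert₂ : Nonempty (TwoSidedStarCert V₂ E₂ k)) :
    (∑ i : ι₁ ⊕ ι₂, ((Sum.elim E₁ E₂ i).card - 1) = k * ((V₁ ∪ V₂).card - 1)) ∧
    Nonempty (TwoSidedStarCert (V₁ ∪ V₂) (Sum.elim E₁ E₂) k) ∧
    WeaklyPC (V₁ ∪ V₂) (Sum.elim E₁ E₂) k ∧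
    Distinguishable (V₁ ∪ V₂) (Sum.elim E₁ E₂) k :=
  stmt14_general V₁ V₂ r hr E₁ E₂ k hc₁ hc₂ hcert₁ hcert₂

end
end
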